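/- For all real a and b, the three integrals ∫₀^∞ x·Ai'(x + a)·Ai(x + b) dx, ∫₀^∞ x·Ai(x + a)·Ai'(x + b) dx and ∫₀^∞ Ai(x + a)·Ai(x + b) dx converge absolutely and satisfy ∫₀^∞ x·Ai'(x + a)·Ai(x + b) dx + ∫₀^∞ x·Ai(x + a)·Ai'(x + b) dx + ∫₀^∞ Ai(x + a)·Ai(x + b) dx = 0. In particular, with ψᵢ, ψⱼ the L²(0,∞)-normalized translates of Ai at two of its zeros, ⟨x·ψᵢ', ψⱼ⟩ + ⟨x·ψⱼ', ψᵢ⟩ = −δᵢⱼ, so that the matrix (1/6)(I + 2(⟨x·ψᵢ', ψⱼ⟩)ᵢⱼ) is antisymmetric. -/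

import Mathlib

open MeasureTheory Filter Set

/-- The Airy function of the first kind, defined as
`Ai(x) = (1/π) · lim_{R→∞} ∫₀^R cos(t³/3 + x·t) dt`. -/
noncomputable def Ai (x : ℝ) : ℝ :=
  (1 / Real.pi) *
    limUnder Filter.atTop (fun R : ℝ => ∫ t in (0:ℝ)..R, Real.cos (t ^ 3 / 3 + x * t))

/-!
Integration by parts in `t` (the phase `φ = t³/3 + x t` has `φ' = t² + x`) turns the
conditionally convergent integral defining `Ai` into absolutely convergent ones. Done once on
`[T, ∞)` with `T² > -x`, it gives a representation of `Ai` near any point that can be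
differentiated under the integral sign, so `Ai` is `C¹`. Done twice on `(0, ∞)` for `x ≥ 1`, it
gives `Ai x = O(x⁻²)` and `Ai' x = O(x⁻¹)`. Then the three integrands are `O(x⁻²)`, and the
identity is the fundamental theorem of calculus for `x Ai(x + a) Ai(x + b)`, which vanishes at `0`
and at `∞`.
-/

open Real Topology Asymptotics

section ParametricIntegral

variable {α : Type*} [MeasurableSpace α] {μ : Measure α} {U : Set ℝ}
  {F F' : ℝ → α → ℝ} {bound : α → ℝ}

theorem hasDerivAt_integral_of_isOpen (hU : IsOpen U)
    (hF_int : ∀ y ∈ U, Integrable (F y) μ)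
    (hF'_meas : ∀ y ∈ U, AEStronglyMeasurable (F' y) μ)
    (h_bound : ∀ᵐ t ∂μ, ∀ y ∈ U, |F' y t| ≤ bound t)
    (bound_integrable : Integrable bound μ)
    (h_diff : ∀ᵐ t ∂μ, ∀ y ∈ U, HasDerivAt (F · t) (F' y t) y) :
    ∀ x ∈ U, HasDerivAt (fun y => ∫ t, F y t ∂μ) (∫ t, F' x t ∂μ) x := fun x hx =>
  (hasDerivAt_integral_of_dominated_loc_of_deriv_le (hU.mem_nhds hx)
    (eventually_of_mem (hU.mem_nhds hx) fun y hy => (hF_int y hy).aestronglyMeasurable)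
    (hF_int x hx) (hF'_meas x hx) h_bound bound_integrable h_diff).2

theorem contDiffOn_integral_of_isOpen (hU : IsOpen U)
    (hF_int : ∀ y ∈ U, Integrable (F y) μ)
    (hF'_meas : ∀ y ∈ U, AEStronglyMeasurable (F' y) μ)
    (h_bound : ∀ᵐ t ∂μ, ∀ y ∈ U, |F' y t| ≤ bound t)
    (bound_integrable : Integrable bound μ)
    (h_diff : ∀ᵐ t ∂μ, ∀ y ∈ U, HasDerivAt (F · t) (F' y t) y)
    (h_cont : ∀ᵐ t ∂μ, ContinuousOn (F' · t) U) :
    ContDiffOn ℝ 1 (fun y => ∫ t, F y t ∂μ) U := by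
  have hderiv := hasDerivAt_integral_of_isOpen hU hF_int hF'_meas h_bound bound_integrable h_diff
  rw [← zero_add 1, contDiffOn_succ_iff_deriv_of_isOpen hU, contDiffOn_zero]
  refine ⟨fun x hx => (hderiv x hx).differentiableAt.differentiableWithinAt, by simp, ?_⟩
  refine (continuousOn_of_dominated hF'_meas (fun y hy => h_bound.mono fun t ht => ht y hy)
    bound_integrable h_cont).congr fun x hx => (hderiv x hx).deriv

end ParametricIntegral

theorem integrableOn_Ici_of_isBigO_inv_sq {f : ℝ → ℝ} {a : ℝ} (hf : ContinuousOn f (Ici a))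
    (ho : f =O[atTop] fun x => (x ^ 2)⁻¹) : IntegrableOn f (Ici a) := by
  refine (hf.locallyIntegrableOn measurableSet_Ici).integrableOn_of_isBigO_atTop ho ?_
  refine ⟨Ioi 1, Ioi_mem_atTop 1, (integrableOn_Ioi_rpow_of_lt (a := -2) (by norm_num)
    one_pos).congr_fun (fun x hx => ?_) measurableSet_Ioi⟩
  simp [Real.rpow_neg (zero_le_one.trans (le_of_lt hx))]

theorem isBigO_comp_add_const {f : ℝ → ℝ} {n : ℕ} (hf : f =O[atTop] fun x => (x ^ n)⁻¹)
    (c : ℝ) : (fun x => f (x + c)) =O[atTop] fun x => (x ^ n)⁻¹ := by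
  have hshift : (fun x : ℝ => x + c) ~[atTop] id :=
    (IsEquivalent.refl (u := id)).add_isLittleO (isLittleO_const_id_atTop c)
  exact (hf.comp_tendsto (tendsto_atTop_add_const_right _ c tendsto_id)).trans
    ((hshift.pow n).inv.isBigO)

noncomputable def airyPhase (x t : ℝ) : ℝ := t ^ 3 / 3 + x * t

@[fun_prop]
theorem continuous_airyPhase_right (x : ℝ) : Continuous (airyPhase x) := by
  unfold airyPhase; fun_prop

@[fun_prop]
theorem continuous_airyPhase_left (t : ℝ) : Continuous (airyPhase · t) := by
  unfold airyPhase; fun_prop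

theorem hasDerivAt_airyPhase_right (x t : ℝ) : HasDerivAt (airyPhase x) (t ^ 2 + x) t :=
  (((hasDerivAt_pow 3 t).div_const 3).add ((hasDerivAt_id t).const_mul x)).congr_deriv
    (by simp)

theorem hasDerivAt_airyPhase_left (x t : ℝ) : HasDerivAt (airyPhase · t) t x :=
  (((hasDerivAt_id x).mul_const t).const_add (t ^ 3 / 3)).congr_deriv (by simp)

theorem hasDerivAt_cos_airyPhase_left (x t : ℝ) :
    HasDerivAt (fun y => cos (airyPhase y t)) (-(t * sin (airyPhase x t))) x :=
  ((hasDerivAt_cos _).comp x (hasDerivAt_airyPhase_left x t)).congr_deriv (by ring)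

/-- `sin φ · φ'' / φ' ^ 2`: what is left of `cos φ = (sin φ)' / φ'` after integrating by
parts. -/
noncomputable def airyG (x t : ℝ) : ℝ := 2 * t * sin (airyPhase x t) / (t ^ 2 + x) ^ 2

theorem hasDerivAt_sin_airyPhase_div {x t : ℝ} (h : t ^ 2 + x ≠ 0) :
    HasDerivAt (fun s => sin (airyPhase x s) / (s ^ 2 + x))
      (cos (airyPhase x t) - airyG x t) t := by
  have hden : HasDerivAt (fun s : ℝ => s ^ 2 + x) (2 * t) t := by
    simpa using (hasDerivAt_pow 2 t).add_const x
  refine (((hasDerivAt_sin _).comp t (hasDerivAt_airyPhase_right x t)).div hden h).congr_deriv ?_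
  simp only [airyG, Function.comp_apply]
  field_simp

section FirstIntegrationByParts

variable {x T : ℝ}

theorem sq_add_pos_of_le (hT : 0 ≤ T) (hx : 0 < T ^ 2 + x) {t : ℝ} (ht : T ≤ t) :
    0 < t ^ 2 + x := by
  nlinarith

theorem integrableOn_airyG (hT : 0 ≤ T) (hx : 0 < T ^ 2 + x) :
    IntegrableOn (airyG x) (Ioi T) := by
  have hpos := fun t (ht : t ∈ Ioi T) => sq_add_pos_of_le hT hx (le_of_lt ht)
  have hmaj : IntegrableOn (fun t => 2 * t / (t ^ 2 + x) ^ 2) (Ioi T) := by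
    refine integrableOn_Ioi_deriv_of_nonneg (g := fun t => -(t ^ 2 + x)⁻¹) (l := 0) ?_
      (fun t ht => ?_) (fun t ht => ?_) ?_
    · have := hx.ne'
      exact (by fun_prop (disch := assumption) :
        ContinuousAt (fun t => -(t ^ 2 + x)⁻¹) T).continuousWithinAt
    · have hden : HasDerivAt (fun s : ℝ => s ^ 2 + x) (2 * t) t := by
        simpa using (hasDerivAt_pow 2 t).add_const x
      exact (hden.inv (hpos t ht).ne').neg.congr_deriv (by ring)
    · have := hpos t ht
      have : 0 ≤ t := hT.trans (le_of_lt ht)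
      positivity
    · have hden := tendsto_atTop_add_const_right _ x (tendsto_pow_atTop (two_ne_zero (α := ℕ)))
      simpa using hden.inv_tendsto_atTop.neg
  refine hmaj.mono' (by unfold airyG; fun_prop : Measurable (airyG x)).aestronglyMeasurable ?_
  filter_upwards [ae_restrict_mem measurableSet_Ioi] with t ht
  have ht0 : 0 ≤ t := hT.trans (le_of_lt ht)
  have := hpos t ht
  rw [Real.norm_eq_abs, airyG, abs_div, abs_mul, abs_of_nonneg (by positivity : 0 ≤ 2 * t),
    abs_of_pos (by positivity : 0 < (t ^ 2 + x) ^ 2)]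
  exact div_le_div_of_nonneg_right (mul_le_of_le_one_right (by positivity) (abs_sin_le_one _))
    (by positivity)

theorem tendsto_integral_cos_airyPhase (hT : 0 ≤ T) (hx : 0 < T ^ 2 + x) :
    Tendsto (fun R => ∫ t in (0)..R, cos (airyPhase x t)) atTop
      (𝓝 ((∫ t in (0)..T, cos (airyPhase x t)) - sin (airyPhase x T) / (T ^ 2 + x)
        + ∫ t in Ioi T, airyG x t)) := by
  have hcos : ∀ a b : ℝ, IntervalIntegrable (fun t => cos (airyPhase x t)) volume a b :=
    fun a b => (by fun_prop : Continuous fun t => cos (airyPhase x t)).intervalIntegrable a b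
  have hsplit : ∀ R, T ≤ R → ∫ t in (0)..R, cos (airyPhase x t) =
      (∫ t in (0)..T, cos (airyPhase x t)) - sin (airyPhase x T) / (T ^ 2 + x)
        + (sin (airyPhase x R) / (R ^ 2 + x) + ∫ t in T..R, airyG x t) := by
    intro R hR
    have hg : IntervalIntegrable (airyG x) volume T R :=
      (intervalIntegrable_iff_integrableOn_Ioc_of_le hR).2
        ((integrableOn_airyG hT hx).mono_set Ioc_subset_Ioi_self)
    have hibp := intervalIntegral.integral_eq_sub_of_hasDerivAt
      (fun t ht => hasDerivAt_sin_airyPhase_div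
        (sq_add_pos_of_le hT hx (uIcc_of_le hR ▸ ht).1).ne') ((hcos T R).sub hg)
    rw [intervalIntegral.integral_sub (hcos T R) hg] at hibp
    rw [← intervalIntegral.integral_add_adjacent_intervals (hcos 0 T) (hcos T R)]
    linarith
  have hbdry : Tendsto (fun R => sin (airyPhase x R) / (R ^ 2 + x)) atTop (𝓝 0) := by
    have hden := tendsto_atTop_add_const_right _ x (tendsto_pow_atTop (two_ne_zero (α := ℕ)))
    refine squeeze_zero_norm' ?_ hden.inv_tendsto_atTop
    filter_upwards [eventually_ge_atTop T] with R hR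
    rw [Real.norm_eq_abs, abs_div, abs_of_pos (sq_add_pos_of_le hT hx hR), div_eq_mul_inv]
    exact mul_le_of_le_one_left (inv_nonneg.2 (sq_add_pos_of_le hT hx hR).le) (abs_sin_le_one _)
  have hlim := tendsto_const_nhds (x := (∫ t in (0)..T, cos (airyPhase x t))
    - sin (airyPhase x T) / (T ^ 2 + x)) |>.add (hbdry.add
      (intervalIntegral_tendsto_integral_Ioi T (integrableOn_airyG hT hx) tendsto_id))
  rw [zero_add] at hlim
  exact hlim.congr' (eventually_ge_atTop T |>.mono fun R hR => (hsplit R hR).symm)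

theorem Ai_eq_of_sq_add_pos (hT : 0 ≤ T) (hx : 0 < T ^ 2 + x) :
    Ai x = 1 / π * ((∫ t in Ioc 0 T, cos (airyPhase x t)) - sin (airyPhase x T) / (T ^ 2 + x)
      + ∫ t in Ioi T, airyG x t) := by
  rw [← intervalIntegral.integral_of_le hT]
  exact congrArg _ (tendsto_integral_cos_airyPhase hT hx).limUnder_eq

end FirstIntegrationByParts

noncomputable def airyGDeriv (x t : ℝ) : ℝ :=
  2 * t ^ 2 * cos (airyPhase x t) / (t ^ 2 + x) ^ 2
    - 4 * t * sin (airyPhase x t) / (t ^ 2 + x) ^ 3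

theorem hasDerivAt_airyG_left {x t : ℝ} (h : t ^ 2 + x ≠ 0) :
    HasDerivAt (airyG · t) (airyGDeriv x t) x := by
  have hsin := (hasDerivAt_sin _).comp x (hasDerivAt_airyPhase_left x t)
  have hden : HasDerivAt (fun y : ℝ => (t ^ 2 + y) ^ 2) (2 * (t ^ 2 + x) ^ 1 * 1) x :=
    ((hasDerivAt_id x).const_add (t ^ 2)).pow 2
  refine ((hsin.const_mul (2 * t)).div hden (pow_ne_zero 2 h)).congr_deriv ?_
  simp only [airyGDeriv, Function.comp_apply]
  field_simp
  ring

theorem abs_airyGDeriv_le {x t : ℝ} (ht : 1 ≤ t) (hx : t ^ 2 ≤ 2 * (t ^ 2 + x)) :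
    |airyGDeriv x t| ≤ 40 / t ^ 2 := by
  have ht0 : 0 < t := one_pos.trans_le ht
  have hq : 0 < t ^ 2 + x := by nlinarith
  have hcos : |2 * t ^ 2 * cos (airyPhase x t) / (t ^ 2 + x) ^ 2| ≤ 8 / t ^ 2 := by
    rw [abs_div, abs_mul, abs_of_pos (by positivity : 0 < 2 * t ^ 2),
      abs_of_pos (by positivity : 0 < (t ^ 2 + x) ^ 2)]
    calc 2 * t ^ 2 * |cos (airyPhase x t)| / (t ^ 2 + x) ^ 2
        ≤ 2 * t ^ 2 * 1 / (t ^ 2 / 2) ^ 2 := by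
          gcongr
          · exact abs_cos_le_one _
          · linarith
      _ = 8 / t ^ 2 := by field_simp; ring
  have hsin : |4 * t * sin (airyPhase x t) / (t ^ 2 + x) ^ 3| ≤ 32 / t ^ 2 := by
    rw [abs_div, abs_mul, abs_of_pos (by positivity : 0 < 4 * t),
      abs_of_pos (by positivity : 0 < (t ^ 2 + x) ^ 3)]
    calc 4 * t * |sin (airyPhase x t)| / (t ^ 2 + x) ^ 3
        ≤ 4 * t * 1 / (t ^ 2 / 2) ^ 3 := by
          gcongr
          · exact abs_sin_le_one _
          · linarith
      _ = 32 / t ^ 2 / t ^ 3 := by field_simp; ring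
      _ ≤ 32 / t ^ 2 := div_le_self (by positivity) (one_le_pow₀ ht)
  calc |airyGDeriv x t| ≤ 8 / t ^ 2 + 32 / t ^ 2 := (abs_sub _ _).trans (add_le_add hcos hsin)
    _ = 40 / t ^ 2 := by ring

theorem contDiff_integral_cos_airyPhase (T : ℝ) :
    ContDiff ℝ 1 fun y => ∫ t in Ioc 0 T, cos (airyPhase y t) := by
  rw [← contDiffOn_univ]
  refine contDiffOn_integral_of_isOpen isOpen_univ (F' := fun y t => -(t * sin (airyPhase y t)))
    (bound := fun t => |t|) (fun y _ => (by fun_prop : Continuous _).integrableOn_Ioc)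
    (fun y _ => (by fun_prop : Continuous _).aestronglyMeasurable)
    (ae_of_all _ fun t y _ => ?_) continuous_abs.integrableOn_Ioc
    (ae_of_all _ fun t y _ => hasDerivAt_cos_airyPhase_left y t)
    (ae_of_all _ fun t => (by fun_prop : Continuous _).continuousOn)
  rw [abs_neg, abs_mul]
  exact mul_le_of_le_one_right (abs_nonneg t) (abs_sin_le_one _)

theorem contDiffOn_integral_airyG {T : ℝ} (hT : 1 ≤ T) :
    ContDiffOn ℝ 1 (fun y => ∫ t in Ioi T, airyG y t) (Ioi (-(T ^ 2 / 2))) := by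
  have hsq : ∀ y ∈ Ioi (-(T ^ 2 / 2)), ∀ t ∈ Ioi T, t ^ 2 ≤ 2 * (t ^ 2 + y) := by
    intro y hy t ht
    simp only [mem_Ioi] at hy ht
    nlinarith
  have hbound : IntegrableOn (fun t : ℝ => 40 / t ^ 2) (Ioi T) := by
    refine (integrableOn_Ici_of_isBigO_inv_sq ?_ ?_).mono_set Ioi_subset_Ici_self
    · exact continuousOn_const.div (continuous_pow 2).continuousOn
        fun t ht => pow_ne_zero 2 (by linarith [mem_Ici.1 ht])
    · simpa only [div_eq_mul_inv] using
        (isBigO_refl (fun t : ℝ => (t ^ 2)⁻¹) atTop).const_mul_left 40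
  refine contDiffOn_integral_of_isOpen isOpen_Ioi (F' := airyGDeriv)
    (bound := fun t => 40 / t ^ 2)
    (fun y hy => integrableOn_airyG (by linarith) (by simp only [mem_Ioi] at hy; nlinarith))
    (fun y _ => (by unfold airyGDeriv; fun_prop : Measurable (airyGDeriv y)).aestronglyMeasurable)
    ?_ hbound ?_ ?_
  · filter_upwards [ae_restrict_mem measurableSet_Ioi] with t ht y hy
    exact abs_airyGDeriv_le (hT.trans (le_of_lt ht)) (hsq y hy t ht)
  · filter_upwards [ae_restrict_mem measurableSet_Ioi] with t ht y hy
    exact hasDerivAt_airyG_left (by nlinarith [hsq y hy t ht, hT.trans (le_of_lt ht)])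
  · filter_upwards [ae_restrict_mem measurableSet_Ioi] with t ht y hy
    have : t ^ 2 + y ≠ 0 := by nlinarith [hsq y hy t ht, hT.trans (le_of_lt ht)]
    unfold airyGDeriv
    exact ContinuousAt.continuousWithinAt (by fun_prop (disch := exact pow_ne_zero _ this))

theorem contDiff_Ai : ContDiff ℝ 1 Ai := by
  refine contDiff_iff_contDiffAt.2 fun x => ?_
  set T := |x| + 1
  have hT : 1 ≤ T := by simp [T]
  have hU : ∀ y ∈ Ioi (-(T ^ 2 / 2)), 0 < T ^ 2 + y := fun y hy => by
    simp only [mem_Ioi] at hy; nlinarith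
  have hx : x ∈ Ioi (-(T ^ 2 / 2)) := by
    simp only [mem_Ioi, T]; nlinarith [abs_nonneg x, neg_abs_le x]
  have hbdry :
      ContDiffOn ℝ 1 (fun y => sin (airyPhase y T) / (T ^ 2 + y)) (Ioi (-(T ^ 2 / 2))) :=
    ContDiffOn.div (by unfold airyPhase; fun_prop) (by fun_prop) fun y hy => (hU y hy).ne'
  have hrep := contDiffOn_const (c := 1 / π) |>.mul
    (((contDiff_integral_cos_airyPhase T).contDiffOn.sub hbdry).add (contDiffOn_integral_airyG hT))
  exact (hrep.congr fun y hy => Ai_eq_of_sq_add_pos (by linarith) (hU y hy)).contDiffAt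
    (isOpen_Ioi.mem_nhds hx)

/-- A second integration by parts: `airyG - airyV` is the `t`-derivative of `-2t cos φ / φ' ^ 3`,
and `airyV` decays like `φ' ^ (-3)`. -/
noncomputable def airyV (x t : ℝ) : ℝ :=
  2 * (x - 5 * t ^ 2) / (t ^ 2 + x) ^ 4 * cos (airyPhase x t)

noncomputable def airyVDeriv (x t : ℝ) : ℝ :=
  6 * (7 * t ^ 2 - x) / (t ^ 2 + x) ^ 5 * cos (airyPhase x t)
    - 2 * (x - 5 * t ^ 2) / (t ^ 2 + x) ^ 4 * (t * sin (airyPhase x t))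

theorem hasDerivAt_cos_airyPhase_div {x t : ℝ} (h : t ^ 2 + x ≠ 0) :
    HasDerivAt (fun s => -2 * s * cos (airyPhase x s) / (s ^ 2 + x) ^ 3)
      (airyG x t - airyV x t) t := by
  have hcos := (hasDerivAt_cos _).comp t (hasDerivAt_airyPhase_right x t)
  have hsq : HasDerivAt (fun s : ℝ => s ^ 2 + x) (2 * t) t := by
    simpa using (hasDerivAt_pow 2 t).add_const x
  refine ((((hasDerivAt_id t).const_mul (-2)).mul hcos).div (hsq.pow 3)
    (pow_ne_zero 3 h)).congr_deriv ?_
  simp only [airyG, airyV, Function.comp_apply, Pi.mul_apply, Pi.pow_apply, id, Nat.cast_ofNat]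
  field_simp
  ring

theorem hasDerivAt_airyV_left {x t : ℝ} (h : t ^ 2 + x ≠ 0) :
    HasDerivAt (airyV · t) (airyVDeriv x t) x := by
  have hden (n : ℕ) :
      HasDerivAt (fun y : ℝ => (t ^ 2 + y) ^ n) (n * (t ^ 2 + x) ^ (n - 1) * 1) x :=
    ((hasDerivAt_id x).const_add _).pow n
  have hnum : HasDerivAt (fun y : ℝ => 2 * (y - 5 * t ^ 2)) 2 x := by
    simpa using ((hasDerivAt_id x).sub_const (5 * t ^ 2)).const_mul 2
  refine ((hnum.div (hden 4) (pow_ne_zero 4 h)).mul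
    (hasDerivAt_cos_airyPhase_left x t)).congr_deriv ?_
  simp only [airyVDeriv, Pi.div_apply, Nat.cast_ofNat]
  field_simp
  ring

section SecondIntegrationByParts

variable {x : ℝ}

theorem abs_airyV_le (hx : 1 ≤ x) (t : ℝ) : |airyV x t| ≤ 10 / x ^ 2 * (1 + t ^ 2)⁻¹ := by
  have hq : 1 + t ^ 2 ≤ t ^ 2 + x := by linarith
  have hxq : x ≤ t ^ 2 + x := by nlinarith [sq_nonneg t]
  have hnum : |2 * (x - 5 * t ^ 2)| ≤ 10 * (t ^ 2 + x) := by
    rw [abs_le]; constructor <;> nlinarith [sq_nonneg t]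
  calc |airyV x t| ≤ 10 * (t ^ 2 + x) / (t ^ 2 + x) ^ 4 * 1 := by
        rw [airyV, abs_mul, abs_div, abs_of_pos (by positivity : (0 : ℝ) < (t ^ 2 + x) ^ 4)]
        gcongr
        exact abs_cos_le_one _
    _ = 10 / ((t ^ 2 + x) * (t ^ 2 + x) * (t ^ 2 + x)) := by field_simp
    _ ≤ 10 / (x * x * (1 + t ^ 2)) := by gcongr
    _ = 10 / x ^ 2 * (1 + t ^ 2)⁻¹ := by field_simp

theorem abs_airyVDeriv_le (hx : 1 ≤ x) {t : ℝ} (ht : 0 ≤ t) :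
    |airyVDeriv x t| ≤ 52 / x * (1 + t ^ 2)⁻¹ := by
  set q := t ^ 2 + x with hq_def
  have hq : 1 + t ^ 2 ≤ q := by linarith
  have hq1 : 1 ≤ q := by nlinarith [sq_nonneg t]
  have hxq : x ≤ q := by nlinarith [sq_nonneg t]
  have htq : t ≤ q := by nlinarith [sq_nonneg (t - 1)]
  have hcos : |6 * (7 * t ^ 2 - x) / q ^ 5 * cos (airyPhase x t)| ≤ 42 / q ^ 2 := by
    have hnum : |6 * (7 * t ^ 2 - x)| ≤ 42 * q := by
      rw [abs_le]; constructor <;> nlinarith [sq_nonneg t]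
    calc |6 * (7 * t ^ 2 - x) / q ^ 5 * cos (airyPhase x t)| ≤ 42 * q / q ^ 5 * 1 := by
          rw [abs_mul, abs_div, abs_of_pos (by positivity : 0 < q ^ 5)]
          gcongr
          exact abs_cos_le_one _
      _ = 42 / q ^ 2 / q ^ 2 := by field_simp
      _ ≤ 42 / q ^ 2 := div_le_self (by positivity) (one_le_pow₀ hq1)
  have hsin : |2 * (x - 5 * t ^ 2) / q ^ 4 * (t * sin (airyPhase x t))| ≤ 10 / q ^ 2 := by
    have hnum : |2 * (x - 5 * t ^ 2)| ≤ 10 * q := by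
      rw [abs_le]; constructor <;> nlinarith [sq_nonneg t]
    calc |2 * (x - 5 * t ^ 2) / q ^ 4 * (t * sin (airyPhase x t))|
        ≤ 10 * q / q ^ 4 * (q * 1) := by
          rw [abs_mul, abs_div, abs_of_pos (by positivity : 0 < q ^ 4), abs_mul t,
            abs_of_nonneg ht]
          gcongr
          exact abs_sin_le_one _
      _ = 10 / q ^ 2 := by field_simp
  calc |airyVDeriv x t| ≤ 42 / q ^ 2 + 10 / q ^ 2 := (abs_sub _ _).trans (add_le_add hcos hsin)
    _ = 52 / (q * q) := by ring
    _ ≤ 52 / (x * (1 + t ^ 2)) := by gcongr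
    _ = 52 / x * (1 + t ^ 2)⁻¹ := by field_simp

theorem integrable_airyV (hx : 1 ≤ x) : Integrable (airyV x) :=
  (integrable_inv_one_add_sq.const_mul _).mono'
    (by unfold airyV; fun_prop : Measurable (airyV x)).aestronglyMeasurable
    (ae_of_all _ fun t => abs_airyV_le hx t)

theorem integral_airyG_eq_integral_airyV (hx : 1 ≤ x) :
    ∫ t in Ioi 0, airyG x t = ∫ t in Ioi 0, airyV x t := by
  have hq (t : ℝ) : 1 ≤ t ^ 2 + x := by nlinarith [sq_nonneg t]
  have hg : IntegrableOn (airyG x) (Ioi 0) := integrableOn_airyG le_rfl (by linarith)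
  have hcont : Continuous fun s => -2 * s * cos (airyPhase x s) / (s ^ 2 + x) ^ 3 := by
    fun_prop (disch := exact fun s => pow_ne_zero 3 (by linarith [hq s]))
  have hbdry :
      Tendsto (fun s => -2 * s * cos (airyPhase x s) / (s ^ 2 + x) ^ 3) atTop (𝓝 0) := by
    have hden := tendsto_atTop_add_const_right _ x (tendsto_pow_atTop (two_ne_zero (α := ℕ)))
    refine squeeze_zero_norm' ?_ (by simpa using hden.inv_tendsto_atTop.const_mul 2)
    filter_upwards [eventually_ge_atTop 0] with s hs
    have hs_le : s ≤ s ^ 2 + x := by nlinarith [sq_nonneg (s - 1)]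
    calc ‖-2 * s * cos (airyPhase x s) / (s ^ 2 + x) ^ 3‖
        ≤ 2 * (s ^ 2 + x) * 1 / (s ^ 2 + x) ^ 3 := by
          rw [Real.norm_eq_abs, abs_div, abs_mul, abs_mul,
            abs_of_pos (pow_pos (by linarith [hq s] : (0 : ℝ) < s ^ 2 + x) 3), abs_neg, abs_two,
            abs_of_nonneg hs]
          gcongr
          exact abs_cos_le_one _
      _ = 2 * (s ^ 2 + x)⁻¹ / (s ^ 2 + x) := by field_simp
      _ ≤ 2 * (s ^ 2 + x)⁻¹ := div_le_self (by positivity) (hq s)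
  have hibp := integral_Ioi_of_hasDerivAt_of_tendsto hcont.continuousWithinAt
    (fun t _ => hasDerivAt_cos_airyPhase_div (by linarith [hq t]))
    (hg.sub (integrable_airyV hx).integrableOn) hbdry
  rw [integral_sub hg (integrable_airyV hx).integrableOn] at hibp
  simp only [mul_zero, zero_mul, zero_div, sub_self] at hibp
  linarith

theorem Ai_eq_integral_airyV (hx : 1 ≤ x) : Ai x = 1 / π * ∫ t in Ioi 0, airyV x t := by
  rw [Ai_eq_of_sq_add_pos le_rfl (by positivity), ← integral_airyG_eq_integral_airyV hx]
  simp [airyPhase]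

theorem hasDerivAt_integral_airyV (hx : 1 < x) :
    HasDerivAt (fun y => ∫ t in Ioi 0, airyV y t) (∫ t in Ioi 0, airyVDeriv x t) x := by
  refine hasDerivAt_integral_of_isOpen isOpen_Ioi (F' := airyVDeriv)
    (bound := fun t => 52 * (1 + t ^ 2)⁻¹)
    (fun y hy => (integrable_airyV (le_of_lt hy)).integrableOn)
    (fun y _ => (by unfold airyVDeriv; fun_prop : Measurable (airyVDeriv y)).aestronglyMeasurable)
    ?_ (integrable_inv_one_add_sq.integrableOn.const_mul _) ?_ x hx
  · filter_upwards [ae_restrict_mem measurableSet_Ioi] with t ht y (hy : 1 < y)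
    refine (abs_airyVDeriv_le hy.le (le_of_lt ht)).trans ?_
    gcongr
    exact div_le_self (by norm_num) hy.le
  · filter_upwards [ae_restrict_mem measurableSet_Ioi] with t ht y (hy : 1 < y)
    exact hasDerivAt_airyV_left (by positivity)

theorem deriv_Ai_eq_integral_airyVDeriv (hx : 1 < x) :
    deriv Ai x = 1 / π * ∫ t in Ioi 0, airyVDeriv x t :=
  (((hasDerivAt_integral_airyV hx).const_mul (1 / π)).congr_of_eventuallyEq
    (eventually_of_mem (isOpen_Ioi.mem_nhds hx) fun _ hy =>
      Ai_eq_integral_airyV (le_of_lt hy))).deriv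

end SecondIntegrationByParts

theorem abs_integral_Ioi_zero_le_of_abs_le_inv_one_add_sq {f : ℝ → ℝ} {C : ℝ}
    (hf : ∀ t > 0, |f t| ≤ C * (1 + t ^ 2)⁻¹) : |∫ t in Ioi 0, f t| ≤ C * (π / 2) := by
  simpa [integral_const_mul] using norm_integral_le_of_norm_le (f := f)
    (integrable_inv_one_add_sq.integrableOn.const_mul C)
    ((ae_restrict_mem measurableSet_Ioi).mono fun t ht =>
      (Real.norm_eq_abs _).trans_le (hf t ht))

theorem abs_Ai_le {x : ℝ} (hx : 1 ≤ x) : |Ai x| ≤ 5 / x ^ 2 := by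
  rw [Ai_eq_integral_airyV hx, abs_mul, abs_of_pos (by positivity : 0 < 1 / π)]
  calc 1 / π * |∫ t in Ioi 0, airyV x t| ≤ 1 / π * (10 / x ^ 2 * (π / 2)) := by
        gcongr
        exact abs_integral_Ioi_zero_le_of_abs_le_inv_one_add_sq fun t _ => abs_airyV_le hx t
    _ = 5 / x ^ 2 := by field_simp; ring

theorem abs_deriv_Ai_le {x : ℝ} (hx : 1 < x) : |deriv Ai x| ≤ 26 / x := by
  rw [deriv_Ai_eq_integral_airyVDeriv hx, abs_mul, abs_of_pos (by positivity : 0 < 1 / π)]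
  calc 1 / π * |∫ t in Ioi 0, airyVDeriv x t| ≤ 1 / π * (52 / x * (π / 2)) := by
        gcongr
        exact abs_integral_Ioi_zero_le_of_abs_le_inv_one_add_sq fun t ht =>
          abs_airyVDeriv_le hx.le ht.le
    _ = 26 / x := by field_simp; ring

theorem isBigO_Ai : Ai =O[atTop] fun x => (x ^ 2)⁻¹ :=
  IsBigO.of_bound 5 <| (eventually_ge_atTop 1).mono fun x hx => by
    simpa [div_eq_mul_inv] using abs_Ai_le hx

theorem isBigO_deriv_Ai : deriv Ai =O[atTop] fun x => x⁻¹ :=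
  IsBigO.of_bound 26 <| (eventually_gt_atTop 1).mono fun x hx => by
    simpa [div_eq_mul_inv, abs_of_pos (one_pos.trans hx)] using abs_deriv_Ai_le hx

theorem integrableOn_Ioi_id_mul_mul {f g : ℝ → ℝ} (hf : Continuous f) (hg : Continuous g)
    (hf_o : f =O[atTop] fun x => x⁻¹) (hg_o : g =O[atTop] fun x => (x ^ 2)⁻¹) :
    IntegrableOn (fun x => x * f x * g x) (Ioi 0) := by
  have hO : (fun x => x * f x * g x) =O[atTop] fun x => (x ^ 2)⁻¹ :=
    (((isBigO_refl (fun x : ℝ => x) atTop).mul hf_o).mul hg_o).trans_eventuallyEq <|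
      (eventually_ne_atTop 0).mono fun x hx => by field_simp
  exact (integrableOn_Ici_of_isBigO_inv_sq (by fun_prop) hO).mono_set Ioi_subset_Ici_self

theorem integral_Ioi_id_mul_deriv_mul_add_eq_zero {u u' v v' : ℝ → ℝ}
    (hu : ∀ x, HasDerivAt u (u' x) x) (hv : ∀ x, HasDerivAt v (v' x) x)
    (hu'_cont : Continuous u') (hv'_cont : Continuous v')
    (hu_o : u =O[atTop] fun x => (x ^ 2)⁻¹) (hv_o : v =O[atTop] fun x => (x ^ 2)⁻¹)
    (hu'_o : u' =O[atTop] fun x => x⁻¹) (hv'_o : v' =O[atTop] fun x => x⁻¹) :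
    IntegrableOn (fun x => x * u' x * v x) (Ioi 0) ∧
    IntegrableOn (fun x => x * u x * v' x) (Ioi 0) ∧
    IntegrableOn (fun x => u x * v x) (Ioi 0) ∧
    (∫ x in Ioi 0, x * u' x * v x) + (∫ x in Ioi 0, x * u x * v' x)
      + (∫ x in Ioi 0, u x * v x) = 0 := by
  have hu_cont : Continuous u := continuous_iff_continuousAt.2 fun x => (hu x).continuousAt
  have hv_cont : Continuous v := continuous_iff_continuousAt.2 fun x => (hv x).continuousAt
  have hinv_sq : Tendsto (fun x : ℝ => (x ^ 2)⁻¹) atTop (𝓝 0) :=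
    (tendsto_pow_atTop two_ne_zero).inv_tendsto_atTop
  have h_id_u : (fun x => x * u x) =O[atTop] fun x => x⁻¹ :=
    ((isBigO_refl (fun x : ℝ => x) atTop).mul hu_o).trans_eventuallyEq <|
      (eventually_ne_atTop 0).mono fun x hx => by field_simp
  have h1 := integrableOn_Ioi_id_mul_mul hu'_cont hv_cont hu'_o hv_o
  have h2 : IntegrableOn (fun x => x * u x * v' x) (Ioi 0) :=
    (integrableOn_Ioi_id_mul_mul hv'_cont hu_cont hv'_o hu_o).congr_fun
      (fun x _ => by ring) measurableSet_Ioi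
  have h3 : IntegrableOn (fun x => u x * v x) (Ioi 0) := by
    refine (integrableOn_Ici_of_isBigO_inv_sq (by fun_prop) ?_).mono_set Ioi_subset_Ici_self
    simpa using hu_o.mul ((hv_o.trans_tendsto hinv_sq).isBigO_one ℝ)
  refine ⟨h1, h2, h3, ?_⟩
  have hderiv (x : ℝ) : HasDerivAt (fun x => x * u x * v x)
      (x * u' x * v x + x * u x * v' x + u x * v x) x :=
    (((hasDerivAt_id' x).mul (hu x)).mul (hv x)).congr_deriv
      (by simp only [Pi.mul_apply]; ring)
  have hlim : Tendsto (fun x => x * u x * v x) atTop (𝓝 0) := by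
    simpa using (h_id_u.trans_tendsto tendsto_inv_atTop_zero).mul (hv_o.trans_tendsto hinv_sq)
  have h12 : IntegrableOn (fun x => x * u' x * v x + x * u x * v' x) (Ioi 0) := h1.add h2
  have hftc := integral_Ioi_of_hasDerivAt_of_tendsto
    (by fun_prop : Continuous _).continuousWithinAt (fun x _ => hderiv x) (h12.add h3) hlim
  rw [integral_add h12 h3, integral_add h1 h2] at hftc
  simpa using hftc

/-- For all real `a` and `b`, the integrals `∫₀^∞ x·Ai'(x+a)·Ai(x+b) dx`,
`∫₀^∞ x·Ai(x+a)·Ai'(x+b) dx` and `∫₀^∞ Ai(x+a)·Ai(x+b) dx` converge absolutely and their sum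
vanishes. -/
theorem airy_integration_by_parts_identity (a b : ℝ) :
    MeasureTheory.IntegrableOn (fun x : ℝ => x * deriv Ai (x + a) * Ai (x + b)) (Set.Ioi 0) ∧
    MeasureTheory.IntegrableOn (fun x : ℝ => x * Ai (x + a) * deriv Ai (x + b)) (Set.Ioi 0) ∧
    MeasureTheory.IntegrableOn (fun x : ℝ => Ai (x + a) * Ai (x + b)) (Set.Ioi 0) ∧
    (∫ x in Set.Ioi (0:ℝ), x * deriv Ai (x + a) * Ai (x + b))
      + (∫ x in Set.Ioi (0:ℝ), x * Ai (x + a) * deriv Ai (x + b))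
      + (∫ x in Set.Ioi (0:ℝ), Ai (x + a) * Ai (x + b)) = 0 := by
  have hderiv (c x : ℝ) : HasDerivAt (fun x => Ai (x + c)) (deriv Ai (x + c)) x :=
    ((contDiff_Ai.differentiable one_ne_zero) (x + c)).hasDerivAt.comp_add_const x c
  have hcont (c : ℝ) : Continuous fun x => deriv Ai (x + c) :=
    (contDiff_Ai.continuous_deriv le_rfl).comp (continuous_add_const c)
  have hO_deriv (c : ℝ) : (fun x => deriv Ai (x + c)) =O[atTop] fun x => x⁻¹ := by
    simpa using isBigO_comp_add_const (n := 1) (by simpa using isBigO_deriv_Ai) c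
  exact integral_Ioi_id_mul_deriv_mul_add_eq_zero (hderiv a) (hderiv b) (hcont a) (hcont b)
    (isBigO_comp_add_const isBigO_Ai a) (isBigO_comp_add_const isBigO_Ai b)
    (hO_deriv a) (hO_deriv b)
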